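/- arXiv:2602.14015 — 7 statements merged into one kernel-verified Lean document; each statement's English description precedes it below -/
import Mathlib

section
/- For a submonoid M of a monoid A, M equals the zero-class of R_M if and only if condition (R) holds: for all x, y ∈ A and all u ∈ M, x·y = 1 implies x·u·y ∈ M. -/
theorem Submonoid.mem_of_forall_mul_mul_mem {A : Type*} [Monoid A] {M : Submonoid A} {u : A}
    (hu : ∀ x y : A, x * 1 * y = 1 → x * u * y ∈ M) : u ∈ M := by
  simpa using hu 1 1 (by simp)

theorem stmt_5 {A : Type*} [Monoid A] (M : Submonoid A) :
    (M : Set A) = {u : A | ∀ x y : A, x * 1 * y = 1 → x * u * y ∈ M} ↔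
      (∀ x y : A, ∀ u ∈ M, x * y = 1 → x * u * y ∈ M) := by
  have zeroClass_subset : {u : A | ∀ x y : A, x * 1 * y = 1 → x * u * y ∈ M} ⊆ M :=
    fun _ hu ↦ Submonoid.mem_of_forall_mul_mul_mem hu
  rw [Set.Subset.antisymm_iff, and_iff_left zeroClass_subset]
  simp only [mul_one]
  exact ⟨fun h x y u hu ↦ h hu x y, fun h u hu x y ↦ h x y u hu⟩
end

section
/- Let M be a submonoid of a monoid A. If there exists a reflexive relation S on A, compatible with the monoid operation (a S b and a' S b' imply a·a' S b·b'), whose zero-class {u : 1 S u} equals M, then M equals the zero-class of R_M. -/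
theorem rel_mul_mul_of_rel {A : Type*} [Monoid A] {S : A → A → Prop} (hrefl : ∀ z, S z z)
    (hcompat : ∀ a b a' b' : A, S a b → S a' b' → S (a * a') (b * b')) {a b : A} (hab : S a b)
    (x y : A) : S (x * a * y) (x * b * y) :=
  hcompat _ _ _ _ (hcompat _ _ _ _ (hrefl x) hab) (hrefl y)

theorem stmt_6 {A : Type*} [Monoid A] (M : Submonoid A) (S : A → A → Prop)
    (hrefl : Reflexive S)
    (hcompat : ∀ a b a' b' : A, S a b → S a' b' → S (a * a') (b * b'))
    (hzero : {u : A | S 1 u} = (M : Set A)) :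
    (M : Set A) =
      {u : A | ∀ x y : A, x * 1 * y = 1 → x * u * y ∈ M} := by
  have hS : ∀ v, S 1 v ↔ v ∈ M := Set.ext_iff.mp hzero
  ext u
  refine ⟨fun hu x y hxy => ?_, fun hu => by simpa using hu 1 1 (by simp)⟩
  have h := rel_mul_mul_of_rel hrefl hcompat ((hS u).mpr hu) x y
  rw [hxy] at h
  exact (hS _).mp h
end

section
/- Let M be a submonoid of a monoid A such that M satisfies condition (R) (for all x, y ∈ A and u ∈ M, x·y = 1 implies x·u·y ∈ M) and such that R_M is compatible with multiplication. Then M is a clot, i.e., M is the zero-class of a reflexive multiplicative relation on A, namely R_M itself. -/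
namespace Submonoid

variable {A : Type*} [Monoid A] (M : Submonoid A)

/-- The relation `R_M` of the paper. -/
def clotRel (a b : A) : Prop :=
  ∀ x y : A, x * a * y = 1 → x * b * y ∈ M

theorem clotRel_refl : Reflexive M.clotRel :=
  fun _ _ _ h => h ▸ M.one_mem

theorem mem_of_clotRel_one {u : A} (h : M.clotRel 1 u) : u ∈ M := by
  simpa using h 1 1 (by simp)

theorem clotRel_one_of_mem (hR : ∀ x y : A, ∀ u ∈ M, x * y = 1 → x * u * y ∈ M)
    {u : A} (hu : u ∈ M) : M.clotRel 1 u :=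
  fun x y h => hR x y u hu (by simpa using h)

end Submonoid

theorem stmt_7 {A : Type*} [Monoid A] (M : Submonoid A)
    (hR : ∀ x y : A, ∀ u ∈ M, x * y = 1 → x * u * y ∈ M)
    (hcompat : ∀ a b a' b' : A,
      (∀ x y : A, x * a * y = 1 → x * b * y ∈ M) →
      (∀ x y : A, x * a' * y = 1 → x * b' * y ∈ M) →
      (∀ x y : A, x * (a * a') * y = 1 → x * (b * b') * y ∈ M)) :
    ∃ S : A → A → Prop, Reflexive S ∧
      (∀ a b a' b' : A, S a b → S a' b' → S (a * a') (b * b')) ∧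
      (M : Set A) = {u : A | S 1 u} ∧
      S = fun a b : A => ∀ x y : A, x * a * y = 1 → x * b * y ∈ M :=
  ⟨M.clotRel, M.clotRel_refl, hcompat,
    Set.ext fun _ => ⟨M.clotRel_one_of_mem hR, M.mem_of_clotRel_one⟩, rfl⟩
end

section
/- If A is a group and M is a submonoid of A, then M equals the zero-class of R_M if and only if M is closed under conjugation (for all a ∈ A and u ∈ M, a·u·a⁻¹ ∈ M). -/
section ConjugationClosed

variable {A : Type*} [Group A]

theorem forall_mul_one_mul_eq_one_imp_iff (S : Set A) (u : A) :
    (∀ x y : A, x * 1 * y = 1 → x * u * y ∈ S) ↔ ∀ x : A, x * u * x⁻¹ ∈ S := by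
  refine ⟨fun h x => h x x⁻¹ (by group), fun h x y hxy => ?_⟩
  obtain rfl : y = x⁻¹ := eq_inv_of_mul_eq_one_right (by simpa using hxy)
  exact h x

theorem eq_setOf_forall_conj_mem_iff (S : Set A) :
    S = {u : A | ∀ x : A, x * u * x⁻¹ ∈ S} ↔ ∀ a : A, ∀ u ∈ S, a * u * a⁻¹ ∈ S := by
  refine ⟨fun h a u hu => (h ▸ hu : u ∈ {u : A | ∀ x : A, x * u * x⁻¹ ∈ S}) a, fun h => ?_⟩
  ext u
  exact ⟨fun hu x => h x u hu, fun hu => by simpa using hu 1⟩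

end ConjugationClosed

theorem stmt_8 {A : Type*} [Group A] (M : Submonoid A) :
    (M : Set A) = {u : A | ∀ x y : A, x * 1 * y = 1 → x * u * y ∈ M} ↔
      (∀ a : A, ∀ u ∈ M, a * u * a⁻¹ ∈ M) := by
  have zero_class_eq : {u : A | ∀ x y : A, x * 1 * y = 1 → x * u * y ∈ M} =
      {u : A | ∀ x : A, x * u * x⁻¹ ∈ (M : Set A)} :=
    Set.ext fun u => forall_mul_one_mul_eq_one_imp_iff (M : Set A) u
  rw [zero_class_eq]
  exact eq_setOf_forall_conj_mem_iff (M : Set A)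
end

section
/- Let A be the monoid of all functions ℕ → ℕ under composition and let M be the submonoid generated by the doubling function u(x) = 2x. Then the zero-class of R_M equals {id}, and in particular M is not equal to the zero-class of R_M. -/
/- A function `g` in the zero-class satisfies `funR id g` with `p = q = id`, so `g = (2 ^ k * ·)`.
Testing it against `pred ∘ succ = id` instead, `pred (g 1) = pred (2 ^ k)` must be the value at `0`
of an element of `doublingM`, i.e. `0`; hence `2 ^ k ≤ 1` and `g = id`. The doubling map lies in
`doublingM` but is not the identity. -/

/-- The submonoid of `ℕ → ℕ` (under composition) generated by the doubling
function, i.e. the set of functions `n ↦ 2 ^ k * n`. -/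
def doublingM : Set (ℕ → ℕ) := {f | ∃ k : ℕ, f = fun n => 2 ^ k * n}

/-- The relation `R_M` on the monoid of endofunctions of `ℕ` under composition. -/
def funR (f g : ℕ → ℕ) : Prop :=
  ∀ p q : ℕ → ℕ, p ∘ f ∘ q = id → p ∘ g ∘ q ∈ doublingM

lemma pow_mul_mem_doublingM (k : ℕ) : (fun n => 2 ^ k * n) ∈ doublingM := ⟨k, rfl⟩

lemma id_mem_doublingM : id ∈ doublingM := ⟨0, by funext n; simp⟩

lemma apply_zero_of_mem_doublingM {f : ℕ → ℕ} (hf : f ∈ doublingM) : f 0 = 0 := by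
  obtain ⟨k, rfl⟩ := hf
  simp

lemma eq_id_of_mem_doublingM_of_apply_one_le {g : ℕ → ℕ} (hg : g ∈ doublingM) (h : g 1 ≤ 1) :
    g = id := by
  obtain ⟨k, rfl⟩ := hg
  have hk : k = 0 := by
    by_contra hk
    have : 2 ≤ 2 ^ k := Nat.le_self_pow hk 2
    simp only [mul_one] at h
    omega
  funext n
  simp [hk]

lemma funR_refl (f : ℕ → ℕ) : funR f f := fun _ _ hpq => hpq ▸ id_mem_doublingM

lemma funR_id_iff {g : ℕ → ℕ} : funR id g ↔ g = id := by
  refine ⟨fun hg => ?_, fun hg => hg ▸ funR_refl id⟩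
  have hg_mem : g ∈ doublingM := hg id id rfl
  have hpred : (fun n => n - 1) ∘ g ∘ (· + 1) ∈ doublingM :=
    hg (fun n => n - 1) (· + 1) (by funext n; simp)
  have h1 : g 1 - 1 = 0 := apply_zero_of_mem_doublingM hpred
  exact eq_id_of_mem_doublingM_of_apply_one_le hg_mem (by omega)

theorem stmt_10 :
    {g : ℕ → ℕ | funR id g} = {id} ∧ doublingM ≠ {g : ℕ → ℕ | funR id g} := by
  have zero_class : {g : ℕ → ℕ | funR id g} = {id} := Set.ext fun _ => funR_id_iff
  refine ⟨zero_class, fun h => ?_⟩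
  have hdouble : (fun n => 2 ^ 1 * n) ∈ ({id} : Set (ℕ → ℕ)) :=
    zero_class ▸ h ▸ pow_mul_mem_doublingM 1
  simpa using congrFun hdouble 1
end

section
/- Let M be a submonoid of a monoid A satisfying condition (*): for all x, y, s, t ∈ A, if x·y = 1, x·s ∈ M, and t·y ∈ M, then t·s ∈ M. Then the relation R_M is compatible with the monoid operation: a R_M b and a' R_M b' imply a·a' R_M b·b'. -/
/-! Split `x (a a') y = 1` as `(x a)(a' y) = 1`. Substituting `b'` for `a'` in the context `(x a, y)`
and `b` for `a` in the context `(x, a' y)` puts `(x a)(b' y)` and `(x b)(a' y)` in `M`; condition (*)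
applied to the factorisation `(x a)(a' y) = 1` then puts `(x b)(b' y)` in `M`. -/

theorem stmt_11 {A : Type*} [Monoid A] (M : Submonoid A)
    (hstar : ∀ x y s t : A, x * y = 1 → x * s ∈ M → t * y ∈ M → t * s ∈ M)
    (a b a' b' : A)
    (hab : ∀ x y : A, x * a * y = 1 → x * b * y ∈ M)
    (hab' : ∀ x y : A, x * a' * y = 1 → x * b' * y ∈ M) :
    ∀ x y : A, x * (a * a') * y = 1 → x * (b * b') * y ∈ M := by
  intro x y h
  have hsplit : x * a * (a' * y) = 1 := by simpa only [mul_assoc] using h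
  have hright : x * a * (b' * y) ∈ M := by
    simpa only [mul_assoc] using hab' (x * a) y (by simpa only [mul_assoc] using h)
  have hleft : x * b * (a' * y) ∈ M := hab x (a' * y) hsplit
  simpa only [mul_assoc] using hstar _ _ _ _ hsplit hright hleft
end

section
/- Let A be the monoid of all endofunctions of a finite set X with at least two elements, under composition, and let M be the submonoid of bijections X → X. Then M is a normal submonoid (for all f, g ∈ A and u ∈ M, f ∘ g ∈ M ↔ f ∘ u ∘ g ∈ M), but M is not homogeneous: there exists f ∈ A with f ∘ M ≠ M ∘ f (where f ∘ M = {f ∘ u : u ∈ M}). -/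
open Function

theorem Finite.bijective_comp_iff {X : Type*} [Finite X] {f g : X → X} :
    Bijective (f ∘ g) ↔ Bijective f ∧ Bijective g :=
  ⟨fun h => ⟨Finite.surjective_iff_bijective.mp h.surjective.of_comp,
      Finite.injective_iff_bijective.mp h.injective.of_comp⟩,
    fun ⟨hf, hg⟩ => hf.comp hg⟩

theorem bijective_comp_comp_iff_of_bijective {X : Type*} [Finite X] (f g : X → X) {u : X → X}
    (hu : Bijective u) : Bijective (f ∘ g) ↔ Bijective (f ∘ u ∘ g) := by
  rw [Finite.bijective_comp_iff, Finite.bijective_comp_iff, hu.of_comp_iff']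

/-- `const X a ∘ u = const X a` for every `u`, whereas `u ∘ const X a = const X (u a)` reaches
every constant map as `u` ranges over the permutations. -/
theorem const_comp_bijective_ne_bijective_comp_const {X : Type*} [Nontrivial X] (a : X) :
    {h : X → X | ∃ u : X → X, Bijective u ∧ h = const X a ∘ u} ≠
      {h : X → X | ∃ u : X → X, Bijective u ∧ h = u ∘ const X a} := by
  classical
  obtain ⟨b, hba⟩ := exists_ne a
  intro hsets
  have hb : const X b ∈ {h : X → X | ∃ u : X → X, Bijective u ∧ h = u ∘ const X a} :=
    ⟨Equiv.swap a b, (Equiv.swap a b).bijective, by ext; simp⟩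
  obtain ⟨u, -, hu⟩ := hsets ▸ hb
  exact hba (congrFun hu a)

theorem stmt_18 {X : Type*} [Finite X] (hX : 2 ≤ Nat.card X) :
    (∀ f g : X → X, ∀ u : X → X, Function.Bijective u →
      (Function.Bijective (f ∘ g) ↔ Function.Bijective (f ∘ u ∘ g))) ∧
    (∃ f : X → X,
      {h : X → X | ∃ u : X → X, Function.Bijective u ∧ h = f ∘ u} ≠
      {h : X → X | ∃ u : X → X, Function.Bijective u ∧ h = u ∘ f}) := by
  have : Nontrivial X := Finite.one_lt_card_iff_nontrivial.mp hX
  obtain ⟨a, -⟩ := exists_pair_ne X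
  exact ⟨fun f g _ hu => bijective_comp_comp_iff_of_bijective f g hu,
    ⟨const X a, const_comp_bijective_ne_bijective_comp_const a⟩⟩
end
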